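/- arXiv:1402.1392 — 2 statements merged into one kernel-verified Lean document; each statement's English description precedes it below -/
import Mathlib

section
/- Assume I₀ ≠ ∅ and let Z ∈ X. Then there exist real numbers φ₁ ≤ φ₂ with φ₂ − φ₁ < 1 such that the image of the imaginary cone under the ℝ-linear extension of Z is exactly Z(I₀) = {r e^{iπφ} ∈ ℂ : r > 0 and φ₁ ≤ φ ≤ φ₂}. -/
/-!
Positive imaginary roots are non-negative: for `α ∈ K` and `w ∈ W` one has `α ≤ w α`, by
induction on the length of `w`, since `w α_s ≥ 0` whenever `ℓ (w r_s) ≥ ℓ w`. The latter is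
Humphreys' argument, which reduces it to the rank-two parabolic subgroups `W_{s,t}`, where it is an
explicit computation (with a braid relation of length `2`, `3` or none according as `a_{st}` is
`0`, `-1` or `≤ -2`).

Hence `I` is a closed convex cone in the non-negative orthant, `B = I ∩ {∑ lᵢ = 1}` is a compact
convex base of it, and `Z(I₀) = ℝ_{>0} · Z(B)`. As `Z ∈ X`, the compact convex set `Z(B) ⊂ ℂ`
misses `0`, so it lies in an open half-plane, on which a branch of the argument is continuous with
values in an interval of length `π`. Its extreme values on `Z(B)` are `πφ₁` and `πφ₂`, and every
value in between is attained since `Z(B)` is connected.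
-/

open scoped BigOperators

noncomputable section

namespace KacMoodyStab

variable {ι : Type*} [Fintype ι] [DecidableEq ι]

/-- A symmetric generalized Cartan matrix: symmetric, `2` on the diagonal,
non-positive integers off the diagonal. -/
def IsGCM (A : Matrix ι ι ℤ) : Prop :=
  A.IsSymm ∧ (∀ i, A i i = 2) ∧ ∀ i j, i ≠ j → A i j ≤ 0

/-- The simple root `α i` in the root lattice `L = ι → ℤ`. -/
def sroot (i : ι) : ι → ℤ := Pi.single i 1

/-- The symmetric bilinear form `(x, y) = ∑ i j, x i * A i j * y j` on the root lattice. -/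
def bform (A : Matrix ι ι ℤ) (x y : ι → ℤ) : ℤ := ∑ i, ∑ j, x i * A i j * y j

/-- The linear functional `λ ↦ (λ, α i)`. -/
def corootFn (A : Matrix ι ι ℤ) (i : ι) : (ι → ℤ) →ₗ[ℤ] ℤ where
  toFun x := ∑ j, x j * A j i
  map_add' x y := by simp [add_mul, Finset.sum_add_distrib]
  map_smul' c x := by simp [Finset.mul_sum, mul_assoc]

lemma corootFn_sroot (A : Matrix ι ι ℤ) (hA : IsGCM A) (i : ι) :
    corootFn A i (sroot i) = 2 := by
  have h : ∀ j, (sroot i) j * A j i = if j = i then A j i else 0 := by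
    intro j
    by_cases h : j = i <;> simp [sroot, Pi.single_apply, h]
  have : corootFn A i (sroot i) = ∑ j, (sroot i) j * A j i := rfl
  rw [this]
  simp [h, hA.2.1 i]

/-- The simple reflection `r i : λ ↦ λ - (λ, α i) α i` as a `ℤ`-linear automorphism
of the root lattice. -/
def srefl (A : Matrix ι ι ℤ) (hA : IsGCM A) (i : ι) : (ι → ℤ) ≃ₗ[ℤ] (ι → ℤ) :=
  Module.reflection (corootFn_sroot A hA i)

/-- The Weyl group, the subgroup of automorphisms of the root lattice generated by the
simple reflections. -/
def weylGroup (A : Matrix ι ι ℤ) (hA : IsGCM A) : Subgroup ((ι → ℤ) ≃ₗ[ℤ] (ι → ℤ)) :=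
  Subgroup.closure (Set.range (srefl A hA))

/-- The set of real roots: the orbit of the simple roots under the Weyl group. -/
def realRoots (A : Matrix ι ι ℤ) (hA : IsGCM A) : Set (ι → ℤ) :=
  {α | ∃ w ∈ weylGroup A hA, ∃ i, α = w (sroot i)}

/-- The set of positive real roots. -/
def posRealRoots (A : Matrix ι ι ℤ) (hA : IsGCM A) : Set (ι → ℤ) :=
  realRoots A hA ∩ {α | ∀ i, 0 ≤ α i}

/-- The Dynkin diagram of a (symmetric) GCM: distinct `i`, `j` are adjacent
iff `A i j < 0`. -/
def dynkin (A : Matrix ι ι ℤ) : SimpleGraph ι where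
  Adj i j := i ≠ j ∧ (A i j < 0 ∨ A j i < 0)
  symm := ⟨fun i j h => ⟨h.1.symm, h.2.symm⟩⟩
  loopless := ⟨fun i h => h.1 rfl⟩

/-- The fundamental set `K` of positive imaginary roots: non-zero, non-negative,
connected support, and `(α, α i) ≤ 0` for all `i`. -/
def fundamentalSet (A : Matrix ι ι ℤ) : Set (ι → ℤ) :=
  {α | (∀ i, 0 ≤ α i) ∧ α ≠ 0 ∧
    ((dynkin A).induce {i | α i ≠ 0}).Connected ∧
    ∀ i, bform A α (sroot i) ≤ 0}

/-- The set of positive imaginary roots: the orbit of the fundamental set under the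
Weyl group. -/
def posImRoots (A : Matrix ι ι ℤ) (hA : IsGCM A) : Set (ι → ℤ) :=
  {β | ∃ w ∈ weylGroup A hA, ∃ α ∈ fundamentalSet A, β = w α}

/-- The set of all roots `Δ = Δ^re ∪ Δ^im`. -/
def allRoots (A : Matrix ι ι ℤ) (hA : IsGCM A) : Set (ι → ℤ) :=
  realRoots A hA ∪ (posImRoots A hA ∪ {α | -α ∈ posImRoots A hA})

/-- The canonical embedding of the root lattice into `V*_ℝ = L ⊗ ℝ = ι → ℝ`. -/
def castR (α : ι → ℤ) : ι → ℝ := fun i => (α i : ℝ)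

/-- The imaginary cone: the closure of the convex hull of `Δ^im_+ ∪ {0}` in `V*_ℝ`. -/
def imCone (A : Matrix ι ι ℤ) (hA : IsGCM A) : Set (ι → ℝ) :=
  closure (convexHull ℝ (insert 0 (castR '' posImRoots A hA)))

/-- The pairing of `Z ∈ V = Hom_ℤ(L, ℂ)` (recorded by its values `Z i = Z(α i)`)
with an element of `V*_ℝ`, via the `ℝ`-linear extension of `Z`. -/
def pairC (Z : ι → ℂ) (l : ι → ℝ) : ℂ := ∑ i, Z i * (l i : ℂ)

/-- The pairing of `Z ∈ V = Hom_ℤ(L, ℂ)` with an element of the root lattice. -/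
def pairCZ (Z : ι → ℂ) (α : ι → ℤ) : ℂ := ∑ i, Z i * (α i : ℂ)

/-- The pairing of `Z ∈ V_ℝ = Hom_ℤ(L, ℝ)` with an element of `V*_ℝ`. -/
def pairR (Z : ι → ℝ) (l : ι → ℝ) : ℝ := ∑ i, Z i * l i

/-- The set `X = V \ ∪_{λ ∈ I₀} H_λ`. -/
def Xset (A : Matrix ι ι ℤ) (hA : IsGCM A) : Set (ι → ℂ) :=
  {Z | ∀ l ∈ imCone A hA \ {0}, pairC Z l ≠ 0}

/-- The regular subset `Xreg = X \ ∪_{α ∈ Δ^re_+} H_α`. -/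
def Xreg (A : Matrix ι ι ℤ) (hA : IsGCM A) : Set (ι → ℂ) :=
  Xset A hA ∩ {Z | ∀ α ∈ posRealRoots A hA, pairCZ Z α ≠ 0}

/-- The sector `{r e^{iπφ} : r > 0, φ₁ ≤ φ ≤ φ₂}` in `ℂ`. -/
def sector (φ₁ φ₂ : ℝ) : Set ℂ :=
  {z | ∃ r : ℝ, 0 < r ∧ ∃ φ : ℝ, φ₁ ≤ φ ∧ φ ≤ φ₂ ∧
    z = (r : ℂ) * Complex.exp (Real.pi * φ * Complex.I)}

/-- The contragredient action of a lattice automorphism `w` on `V = Hom_ℤ(L, ℂ)`: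
`(w·Z)(α i) = Z(w⁻¹ α i)`. -/
def actC (w : (ι → ℤ) ≃ₗ[ℤ] (ι → ℤ)) (Z : ι → ℂ) : ι → ℂ :=
  fun i => ∑ j, Z j * ((w.symm (sroot i)) j : ℂ)

/-- The contragredient action of a lattice automorphism `w` on `V_ℝ = Hom_ℤ(L, ℝ)`:
`(w·Z)(α i) = Z(w⁻¹ α i)`. -/
def actR (w : (ι → ℤ) ≃ₗ[ℤ] (ι → ℤ)) (Z : ι → ℝ) : ι → ℝ :=
  fun i => ∑ j, Z j * ((w.symm (sroot i)) j : ℝ)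

/-- The `ℝ`-linear extension of a lattice automorphism `w` to `V*_ℝ = L ⊗ ℝ`. -/
def extR (w : (ι → ℤ) ≃ₗ[ℤ] (ι → ℤ)) (l : ι → ℝ) : ι → ℝ :=
  fun i => ∑ j, ((w (sroot j)) i : ℝ) * l j

/-- Finite type for a GCM (Kac's condition (Fin)). -/
def IsFiniteType (A : Matrix ι ι ℤ) : Prop :=
  A.det ≠ 0 ∧
  (∃ u : ι → ℝ, (∀ i, 0 < u i) ∧ ∀ i, 0 < (A.map (Int.cast : ℤ → ℝ)).mulVec u i) ∧
  ∀ u : ι → ℝ, (∀ i, 0 ≤ (A.map (Int.cast : ℤ → ℝ)).mulVec u i) →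
    (∀ i, 0 < u i) ∨ u = 0

/-- The (open) Weyl chamber `C_ℝ` in `V_ℝ`. -/
def weylChamber : Set (ι → ℝ) := {Z | ∀ i, 0 < Z i}

/-- The closed Weyl chamber in `V_ℝ`. -/
def weylChamberCl : Set (ι → ℝ) := {Z | ∀ i, 0 ≤ Z i}

/-- The Tits cone `T_ℝ = ∪_{w ∈ W} w(C̄_ℝ)`. -/
def titsCone (A : Matrix ι ι ℤ) (hA : IsGCM A) : Set (ι → ℝ) :=
  ⋃ w ∈ weylGroup A hA, actR w '' (weylChamberCl (ι := ι))

/-- The regular part of the Tits cone `T_{ℝ,reg} = ∪_{w ∈ W} w(C_ℝ)`. -/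
def titsConeReg (A : Matrix ι ι ℤ) (hA : IsGCM A) : Set (ι → ℝ) :=
  ⋃ w ∈ weylGroup A hA, actR w '' (weylChamber (ι := ι))

/-- The normalized regular subset `Xreg^N = {Z ∈ Xreg : φ^I(Z) = 1/2}`:
the image `Z(I₀)` is a sector `{r e^{iπφ} : r > 0, φ₁ ≤ φ ≤ φ₂}` with
`φ₂ - φ₁ < 1` and midpoint `(φ₁ + φ₂)/2 = 1/2`. -/
def XregN (A : Matrix ι ι ℤ) (hA : IsGCM A) : Set (ι → ℂ) :=
  {Z | Z ∈ Xreg A hA ∧ ∃ φ₁ φ₂ : ℝ, φ₁ ≤ φ₂ ∧ φ₂ - φ₁ < 1 ∧ φ₁ + φ₂ = 1 ∧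
    pairC Z '' (imCone A hA \ {0}) = sector φ₁ φ₂}

/-- The semi-closed upper half-plane `H = ℍ ∪ ℝ_{<0}`. -/
def semiClosedH : Set ℂ := {z | 0 < z.im} ∪ {z | z.im = 0 ∧ z.re < 0}

/-- The normalized complexified Weyl chamber
`C^N = {Z ∈ Xreg^N : Z(α i) ∈ H for all i}`. -/
def CN (A : Matrix ι ι ℤ) (hA : IsGCM A) : Set (ι → ℂ) :=
  {Z | Z ∈ XregN A hA ∧ ∀ i, Z i ∈ semiClosedH}

/-- The regular subset of the complexified Tits cone:
`T_reg = {Z ∈ Xreg : Z(I₀) ⊆ ℍ}`. -/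
def Treg (A : Matrix ι ι ℤ) (hA : IsGCM A) : Set (ι → ℂ) :=
  {Z | Z ∈ Xreg A hA ∧ ∀ l ∈ imCone A hA \ {0}, 0 < (pairC Z l).im}

open Classical in
/-- The phase `φ^I(Z)` of the imaginary cone with respect to `Z`, normalized by its
representative with `0 < φ₁`, `φ₂ < 1` (which exists and is unique when `Z(I₀) ⊆ ℍ`). -/
def phaseI (A : Matrix ι ι ℤ) (hA : IsGCM A) (Z : ι → ℂ) : ℝ :=
  if h : ∃ p : ℝ × ℝ, p.1 ≤ p.2 ∧ p.2 - p.1 < 1 ∧ 0 < p.1 ∧ p.2 < 1 ∧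
      pairC Z '' (imCone A hA \ {0}) = sector p.1 p.2
  then (h.choose.1 + h.choose.2) / 2 else 0

/-- The retraction `h_t(Z) = e^{iπt(1/2 - φ^I(Z))} · Z`. -/
def hRetract (A : Matrix ι ι ℤ) (hA : IsGCM A) (t : ℝ) (Z : ι → ℂ) : ι → ℂ :=
  Complex.exp (Real.pi * t * (1 / 2 - phaseI A hA Z) * Complex.I) • Z

/-- The wall `W_{i,+}`. -/
def wallPlus (A : Matrix ι ι ℤ) (hA : IsGCM A) (i : ι) : Set (ι → ℂ) :=
  {Z | Z ∈ XregN A hA ∧ ((Z i).im = 0 ∧ 0 < (Z i).re) ∧ ∀ j, j ≠ i → 0 < (Z j).im}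

/-- The wall `W_{i,-}`. -/
def wallMinus (A : Matrix ι ι ℤ) (hA : IsGCM A) (i : ι) : Set (ι → ℂ) :=
  {Z | Z ∈ XregN A hA ∧ ((Z i).im = 0 ∧ (Z i).re < 0) ∧ ∀ j, j ≠ i → 0 < (Z j).im}

/-- The defining relations of the Artin group attached to a symmetric GCM:
`σ i σ j = σ j σ i` if `a i j = 0` and `σ i σ j σ i = σ j σ i σ j` if `a i j = -1`. -/
def artinRels (A : Matrix ι ι ℤ) : Set (FreeGroup ι) :=
  {r | ∃ i j : ι,
    (A i j = 0 ∧ r = FreeGroup.of i * FreeGroup.of j *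
      (FreeGroup.of j * FreeGroup.of i)⁻¹) ∨
    (A i j = -1 ∧ r = FreeGroup.of i * FreeGroup.of j * FreeGroup.of i *
      (FreeGroup.of j * FreeGroup.of i * FreeGroup.of j)⁻¹)}

/-- The Artin group attached to a symmetric GCM. -/
def ArtinGroup (A : Matrix ι ι ℤ) := PresentedGroup (artinRels A)

instance (A : Matrix ι ι ℤ) : Group (ArtinGroup A) :=
  inferInstanceAs (Group (PresentedGroup (artinRels A)))

lemma IsGCM.submatrix {κ : Type*} [Fintype κ] [DecidableEq κ] {A : Matrix ι ι ℤ}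
    (hA : IsGCM A) (f : κ → ι) (hf : Function.Injective f) :
    IsGCM (A.submatrix f f) :=
  ⟨hA.1.submatrix f, fun i => hA.2.1 (f i),
    fun i j hij => hA.2.2 _ _ fun h => hij (hf h)⟩

section Coxeter

variable {A : Matrix ι ι ℤ} {hA : IsGCM A}

lemma corootFn_apply_sroot (i j : ι) : corootFn A i (sroot j) = A j i := by
  simp [corootFn, sroot, Pi.single_apply]

lemma srefl_apply (i : ι) (x : ι → ℤ) :
    srefl A hA i x = x - corootFn A i x • sroot i :=
  Module.reflection_apply x (corootFn_sroot A hA i)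

lemma srefl_sroot (i j : ι) : srefl A hA i (sroot j) = sroot j - A j i • sroot i := by
  rw [srefl_apply, corootFn_apply_sroot]

lemma srefl_mul_self (i : ι) : srefl A hA i * srefl A hA i = 1 :=
  LinearEquiv.ext (Module.involutive_reflection (corootFn_sroot A hA i))

lemma srefl_inv (i : ι) : (srefl A hA i)⁻¹ = srefl A hA i :=
  inv_eq_of_mul_eq_one_right (srefl_mul_self i)

lemma mul_srefl_mul_srefl (w : (ι → ℤ) ≃ₗ[ℤ] (ι → ℤ)) (i : ι) :
    w * srefl A hA i * srefl A hA i = w := by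
  rw [mul_assoc, srefl_mul_self, mul_one]

variable (A hA) in
def wordProd (l : List ι) : (ι → ℤ) ≃ₗ[ℤ] (ι → ℤ) := (l.map (srefl A hA)).prod

@[simp] lemma wordProd_nil : wordProd A hA [] = 1 := rfl

@[simp] lemma wordProd_cons (i : ι) (l : List ι) :
    wordProd A hA (i :: l) = srefl A hA i * wordProd A hA l := by
  simp [wordProd]

@[simp] lemma wordProd_append (l₁ l₂ : List ι) :
    wordProd A hA (l₁ ++ l₂) = wordProd A hA l₁ * wordProd A hA l₂ := by
  simp [wordProd]

lemma wordProd_reverse (l : List ι) : wordProd A hA l.reverse = (wordProd A hA l)⁻¹ := by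
  induction l with
  | nil => simp
  | cons i l ih => simp [ih, srefl_inv]

variable (A hA) in
def parabolic (S : Set ι) : Subgroup ((ι → ℤ) ≃ₗ[ℤ] (ι → ℤ)) where
  carrier := {w | ∃ l : List ι, (∀ x ∈ l, x ∈ S) ∧ wordProd A hA l = w}
  one_mem' := ⟨[], by simp, rfl⟩
  mul_mem' := by
    rintro _ _ ⟨l₁, hl₁, rfl⟩ ⟨l₂, hl₂, rfl⟩
    exact ⟨l₁ ++ l₂, by simpa using fun x => Or.rec (hl₁ x) (hl₂ x), wordProd_append l₁ l₂⟩
  inv_mem' := by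
    rintro _ ⟨l, hl, rfl⟩
    exact ⟨l.reverse, by simpa using hl, wordProd_reverse l⟩

lemma mem_parabolic {S : Set ι} {w : (ι → ℤ) ≃ₗ[ℤ] (ι → ℤ)} :
    w ∈ parabolic A hA S ↔ ∃ l : List ι, (∀ x ∈ l, x ∈ S) ∧ wordProd A hA l = w :=
  Iff.rfl

lemma srefl_mem_parabolic {S : Set ι} {i : ι} (hi : i ∈ S) : srefl A hA i ∈ parabolic A hA S :=
  mem_parabolic.2 ⟨[i], by simpa using hi, by simp⟩

lemma parabolic_mono {S T : Set ι} (hST : S ⊆ T) : parabolic A hA S ≤ parabolic A hA T := by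
  rintro _ ⟨l, hl, rfl⟩
  exact ⟨l, fun x hx => hST (hl x hx), rfl⟩

lemma weylGroup_le_parabolic_univ : weylGroup A hA ≤ parabolic A hA Set.univ :=
  (Subgroup.closure_le _).2 <| Set.range_subset_iff.2 fun _ => srefl_mem_parabolic trivial

variable (A hA) in
/-- Junk value `0` off `parabolic A hA S`. -/
def wordLength (S : Set ι) (w : (ι → ℤ) ≃ₗ[ℤ] (ι → ℤ)) : ℕ :=
  sInf {n | ∃ l : List ι, (∀ x ∈ l, x ∈ S) ∧ l.length = n ∧ wordProd A hA l = w}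

variable {S T : Set ι} {v w : (ι → ℤ) ≃ₗ[ℤ] (ι → ℤ)}

lemma wordLength_wordProd_le {l : List ι} (hl : ∀ x ∈ l, x ∈ S) :
    wordLength A hA S (wordProd A hA l) ≤ l.length :=
  Nat.sInf_le ⟨l, hl, rfl, rfl⟩

lemma exists_reduced_word (hw : w ∈ parabolic A hA S) :
    ∃ l : List ι, (∀ x ∈ l, x ∈ S) ∧ l.length = wordLength A hA S w ∧
      wordProd A hA l = w := by
  obtain ⟨l, hl, rfl⟩ := mem_parabolic.1 hw
  exact Nat.sInf_mem (s := {n | ∃ l' : List ι, (∀ x ∈ l', x ∈ S) ∧ l'.length = n ∧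
    wordProd A hA l' = wordProd A hA l}) ⟨l.length, l, hl, rfl, rfl⟩

lemma wordLength_one : wordLength A hA S 1 = 0 :=
  Nat.eq_zero_of_le_zero (wordLength_wordProd_le (l := []) (by simp))

lemma wordLength_srefl_le {i : ι} (hi : i ∈ S) : wordLength A hA S (srefl A hA i) ≤ 1 := by
  simpa using wordLength_wordProd_le (hA := hA) (l := [i]) (by simpa using hi)

lemma wordLength_mul_le (hv : v ∈ parabolic A hA S) (hw : w ∈ parabolic A hA S) :
    wordLength A hA S (v * w) ≤ wordLength A hA S v + wordLength A hA S w := by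
  obtain ⟨l₁, hl₁, hlen₁, rfl⟩ := exists_reduced_word hv
  obtain ⟨l₂, hl₂, hlen₂, rfl⟩ := exists_reduced_word hw
  rw [← hlen₁, ← hlen₂, ← List.length_append, ← wordProd_append]
  exact wordLength_wordProd_le (by simpa using fun x => Or.rec (hl₁ x) (hl₂ x))

lemma wordLength_le_of_subset (hST : S ⊆ T) (hw : w ∈ parabolic A hA S) :
    wordLength A hA T w ≤ wordLength A hA S w := by
  obtain ⟨l, hl, hlen, rfl⟩ := exists_reduced_word hw
  exact hlen ▸ wordLength_wordProd_le fun x hx => hST (hl x hx)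

lemma exists_isChain_wordProd_eq (l : List ι) :
    ∃ l' : List ι, l'.IsChain (· ≠ ·) ∧ wordProd A hA l' = wordProd A hA l ∧
      l'.length ≤ l.length ∧ l' ⊆ l := by
  induction l with
  | nil => exact ⟨[], List.isChain_nil, rfl, le_rfl, List.nil_subset _⟩
  | cons a l ih =>
    obtain ⟨l', hc, hp, hlen, hsub⟩ := ih
    match l', hc, hp, hlen, hsub with
    | [], _, hp, _, _ => exact ⟨[a], List.isChain_singleton a, by simp [← hp], by simp, by simp⟩
    | c :: l', hc, hp, hlen, hsub =>
      by_cases hac : a = c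
      · refine ⟨l', hc.tail, ?_, by simp at hlen ⊢; omega, fun x hx => ?_⟩
        · rw [wordProd_cons, ← hp, wordProd_cons, ← mul_assoc, hac, srefl_mul_self, one_mul]
        · exact List.mem_cons_of_mem a (hsub (List.mem_cons_of_mem c hx))
      · exact ⟨a :: c :: l', List.isChain_cons_cons.2 ⟨hac, hc⟩, by simp [hp],
          by simp at hlen ⊢; omega, List.cons_subset_cons a hsub⟩

lemma exists_reduced_word_isChain (hw : w ∈ parabolic A hA S) :
    ∃ l : List ι, (∀ x ∈ l, x ∈ S) ∧ l.IsChain (· ≠ ·) ∧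
      l.length = wordLength A hA S w ∧ wordProd A hA l = w := by
  obtain ⟨l, hl, hlen, rfl⟩ := exists_reduced_word hw
  obtain ⟨l', hc, hp, hle, hsub⟩ := exists_isChain_wordProd_eq (hA := hA) l
  have hl' : ∀ x ∈ l', x ∈ S := fun x hx => hl x (hsub hx)
  refine ⟨l', hl', hc, le_antisymm (hlen ▸ hle) ?_, hp⟩
  exact hp ▸ wordLength_wordProd_le hl'

end Coxeter

section RankTwo

variable {A : Matrix ι ι ℤ} {hA : IsGCM A} {s t : ι}

lemma srefl_mul_srefl_comm (h : A s t = 0) :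
    srefl A hA s * srefl A hA t = srefl A hA t * srefl A hA s := by
  have hts : A t s = 0 := (hA.1.apply s t).trans h
  refine LinearEquiv.ext fun x => ?_
  simp only [LinearEquiv.mul_apply, srefl_apply, map_sub, map_smul, corootFn_apply_sroot, h, hts]
  module

lemma srefl_braid (h : A s t = -1) :
    srefl A hA s * srefl A hA t * srefl A hA s
      = srefl A hA t * srefl A hA s * srefl A hA t := by
  have hts : A t s = -1 := (hA.1.apply s t).trans h
  refine LinearEquiv.ext fun x => ?_
  simp only [LinearEquiv.mul_apply, srefl_apply, map_sub, map_smul, corootFn_apply_sroot, h,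
    hts, hA.2.1]
  module

lemma srefl_smul_add_smul_left (p q : ℤ) :
    srefl A hA s (p • sroot s + q • sroot t) = (-p - A t s * q) • sroot s + q • sroot t := by
  rw [map_add, map_smul, map_smul, srefl_sroot, srefl_sroot, hA.2.1]
  module

lemma srefl_smul_add_smul_right (p q : ℤ) :
    srefl A hA t (p • sroot s + q • sroot t) = p • sroot s + (-q - A s t * p) • sroot t := by
  rw [map_add, map_smul, map_smul, srefl_sroot, srefl_sroot, hA.2.1]
  module

/-- For `A s t ≤ -2` the coefficients grow along an alternating word. The last two conjuncts are
the induction invariant: the coefficient of the root whose reflection acted last dominates. -/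
lemma wordProd_apply_sroot_of_le_neg_two (hst : s ≠ t) (hb : A s t ≤ -2) (l : List ι)
    (hmem : ∀ x ∈ l, x = s ∨ x = t) (hc : l.IsChain (· ≠ ·)) (hlast : l.getLast? ≠ some s) :
    ∃ p q : ℤ, 0 ≤ p ∧ 0 ≤ q ∧ wordProd A hA l (sroot s) = p • sroot s + q • sroot t ∧
      (l.head? = some t → p ≤ q) ∧ (l.head? = some s → q ≤ p) := by
  have hts : A t s = A s t := (hA.1.apply t s).symm
  induction l with
  | nil => exact ⟨1, 0, by simp, le_rfl, by simp, by simp, by simp⟩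
  | cons a l ih =>
    rcases l with _ | ⟨b, l⟩
    · have hat : a = t := (hmem a (by simp)).resolve_left (by simpa using hlast)
      subst a
      refine ⟨1, -A s t, by simp, by omega, ?_, fun _ => by omega, by simp [hst.symm]⟩
      simp only [wordProd_cons, wordProd_nil, mul_one, srefl_sroot]
      module
    obtain ⟨p, q, hp, hq, heq, hpq, hqp⟩ := ih (fun x hx => hmem x (List.mem_cons_of_mem a hx))
      hc.tail (by simpa [List.getLast?_cons_cons] using hlast)
    have hab : a ≠ b := (List.isChain_cons_cons.1 hc).1
    have hb' := hmem b (by simp)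
    rcases hmem a (by simp) with ha | ha <;> subst a
    · have hbt : b = t := hb'.resolve_left hab.symm
      subst b
      refine ⟨-p - A t s * q, q, by nlinarith [hpq rfl], hq, ?_, by simp [hst],
        fun _ => by nlinarith [hpq rfl]⟩
      rw [wordProd_cons, LinearEquiv.mul_apply, heq, srefl_smul_add_smul_left]
    · have hbs : b = s := hb'.resolve_right hab.symm
      subst b
      refine ⟨p, -q - A s t * p, hp, by nlinarith [hqp rfl], ?_, fun _ => by nlinarith [hqp rfl],
        by simp [hst.symm]⟩
      rw [wordProd_cons, LinearEquiv.mul_apply, heq, srefl_smul_add_smul_right]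

lemma getLast?_ne_of_length_le {l : List ι} (hmem : ∀ x ∈ l, x = s ∨ x = t)
    (hl : l.length ≤ wordLength A hA {s, t} (wordProd A hA l * srefl A hA s)) :
    l.getLast? ≠ some s := by
  intro hs
  obtain ⟨l₀, rfl⟩ := List.getLast?_eq_some_iff.1 hs
  have := wordLength_wordProd_le (hA := hA) (S := {s, t}) (l := l₀)
    (fun x hx => by simpa using hmem x (by simp [hx]))
  simp [mul_srefl_mul_srefl] at hl
  omega

lemma wordProd_apply_sroot_of_eq_zero (h0 : A s t = 0) {l : List ι}
    (hmem : ∀ x ∈ l, x = s ∨ x = t) (hc : l.IsChain (· ≠ ·))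
    (hl : l.length ≤ wordLength A hA {s, t} (wordProd A hA l * srefl A hA s)) :
    wordProd A hA l (sroot s) = sroot s := by
  have hlast := getLast?_ne_of_length_le hmem hl
  rcases l.eq_nil_or_concat' with rfl | ⟨l, x, rfl⟩
  · simp
  have hx : x = t := (hmem x (by simp)).resolve_left (by simpa using hlast)
  subst x
  rcases l.eq_nil_or_concat' with rfl | ⟨l, y, rfl⟩
  · simp [srefl_sroot, h0]
  have hy : y = s := (hmem y (by simp)).resolve_right
    ((List.isChain_append.1 hc).2.2 y (by simp) t (by simp))
  subst y
  -- `r s` and `r t` commute, so appending `s` to `l s t` gives the shorter word `l t`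
  have hshort : wordProd A hA (l ++ [s] ++ [t]) * srefl A hA s = wordProd A hA (l ++ [t]) := by
    simp only [wordProd_append, wordProd_cons, wordProd_nil, mul_one, mul_assoc,
      srefl_mul_srefl_comm (hA := hA) h0]
    rw [srefl_mul_self, mul_one]
  have := wordLength_wordProd_le (hA := hA) (S := {s, t}) (l := l ++ [t])
    (fun z hz => by simpa using hmem z (by simp at hz ⊢; tauto))
  rw [hshort] at hl
  simp at hl this
  omega

lemma wordProd_apply_sroot_of_eq_neg_one (h1 : A s t = -1) {l : List ι}
    (hmem : ∀ x ∈ l, x = s ∨ x = t) (hc : l.IsChain (· ≠ ·))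
    (hl : l.length ≤ wordLength A hA {s, t} (wordProd A hA l * srefl A hA s)) :
    ∃ p q : ℤ, 0 ≤ p ∧ 0 ≤ q ∧ wordProd A hA l (sroot s) = p • sroot s + q • sroot t := by
  have hts : A t s = -1 := (hA.1.apply t s).symm.trans h1
  have hlast := getLast?_ne_of_length_le hmem hl
  rcases l.eq_nil_or_concat' with rfl | ⟨l, x, rfl⟩
  · exact ⟨1, 0, zero_le_one, le_rfl, by simp⟩
  have hx : x = t := (hmem x (by simp)).resolve_left (by simpa using hlast)
  subst x
  rcases l.eq_nil_or_concat' with rfl | ⟨l, y, rfl⟩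
  · exact ⟨1, 1, zero_le_one, zero_le_one, by simp [srefl_sroot, h1]⟩
  have hy : y = s := (hmem y (by simp)).resolve_right
    ((List.isChain_append.1 hc).2.2 y (by simp) t (by simp))
  subst y
  rcases l.eq_nil_or_concat' with rfl | ⟨l, z, rfl⟩
  · refine ⟨0, 1, le_rfl, zero_le_one, ?_⟩
    simp only [List.nil_append, wordProd_append, wordProd_cons, wordProd_nil, mul_one,
      LinearEquiv.mul_apply, srefl_sroot, map_sub, map_smul, h1, hts, hA.2.1]
    module
  have hz : z = t := (hmem z (by simp)).resolve_left
    ((List.isChain_append.1 hc.left_of_append).2.2 z (by simp) s (by simp))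
  subst z
  -- by the braid relation `t s t = s t s`, appending `s` to `l t s t` gives the shorter `l s t`
  have hshort : wordProd A hA (l ++ [t] ++ [s] ++ [t]) * srefl A hA s =
      wordProd A hA (l ++ [s, t]) := by
    simp only [wordProd_append, wordProd_cons, wordProd_nil, mul_one, mul_assoc]
    congr 1
    rw [← mul_assoc, ← mul_assoc, ← srefl_braid (hA := hA) h1, mul_srefl_mul_srefl]
  have := wordLength_wordProd_le (hA := hA) (S := {s, t}) (l := l ++ [s, t])
    (fun w hw => by simpa using hmem w (by simp at hw ⊢; tauto))
  rw [hshort] at hl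
  simp at hl this
  omega

theorem exists_nonneg_apply_sroot_of_rankTwo (hst : s ≠ t) {u : (ι → ℤ) ≃ₗ[ℤ] (ι → ℤ)}
    (hu : u ∈ parabolic A hA {s, t})
    (h : wordLength A hA {s, t} u ≤ wordLength A hA {s, t} (u * srefl A hA s)) :
    ∃ p q : ℤ, 0 ≤ p ∧ 0 ≤ q ∧ u (sroot s) = p • sroot s + q • sroot t := by
  obtain ⟨l, hlS, hc, hlen, rfl⟩ := exists_reduced_word_isChain hu
  have hmem : ∀ x ∈ l, x = s ∨ x = t := by simpa using hlS
  rw [← hlen] at h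
  obtain h0 | h1 | h2 : A s t = 0 ∨ A s t = -1 ∨ A s t ≤ -2 := by
    have := hA.2.2 s t hst
    omega
  · exact ⟨1, 0, zero_le_one, le_rfl, by simpa using wordProd_apply_sroot_of_eq_zero h0 hmem hc h⟩
  · exact wordProd_apply_sroot_of_eq_neg_one h1 hmem hc h
  · obtain ⟨p, q, hp, hq, he, -⟩ :=
      wordProd_apply_sroot_of_le_neg_two hst h2 l hmem hc (getLast?_ne_of_length_le hmem h)
    exact ⟨p, q, hp, hq, he⟩

end RankTwo

section Positivity

open Set

variable {A : Matrix ι ι ℤ} {hA : IsGCM A} {w : (ι → ℤ) ≃ₗ[ℤ] (ι → ℤ)}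

/-- Among the factorisations `w = v * u` with `u ∈ W_S` and `ℓ v + ℓ_S u ≤ ℓ w`, one with `ℓ v`
minimal. -/
lemma exists_mul_parabolic_factorization (hw : w ∈ parabolic A hA univ) (S : Set ι) :
    ∃ v ∈ parabolic A hA univ, ∃ u ∈ parabolic A hA S, w = v * u ∧
      wordLength A hA univ v + wordLength A hA S u ≤ wordLength A hA univ w ∧
      (∀ x ∈ S, wordLength A hA univ v ≤ wordLength A hA univ (v * srefl A hA x)) ∧
      ∀ x ∈ S, wordLength A hA univ (w * srefl A hA x) < wordLength A hA univ w →
        wordLength A hA univ v < wordLength A hA univ w := by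
  classical
  have hP : ∃ n, ∃ v, ∃ u ∈ parabolic A hA S, w = v * u ∧
      wordLength A hA univ v + wordLength A hA S u ≤ wordLength A hA univ w ∧
      wordLength A hA univ v = n :=
    ⟨_, w, 1, one_mem _, (mul_one w).symm, by simp [wordLength_one], rfl⟩
  obtain ⟨v, u, hu, rfl, hvu, hvn⟩ := Nat.find_spec hP
  have hmin : ∀ v', ∀ u' ∈ parabolic A hA S, v * u = v' * u' →
      wordLength A hA univ v' + wordLength A hA S u' ≤ wordLength A hA univ (v * u) →
      wordLength A hA univ v ≤ wordLength A hA univ v' :=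
    fun v' u' hu' he hl => hvn ▸ Nat.find_min' hP ⟨v', u', hu', he, hl, rfl⟩
  have hv : v ∈ parabolic A hA univ := by
    simpa using mul_mem hw (inv_mem (parabolic_mono (subset_univ S) hu))
  refine ⟨v, hv, u, hu, rfl, hvu, fun x hx => ?_, fun x hx hlt => ?_⟩
  · by_contra! hlt
    have hlen : wordLength A hA univ (v * srefl A hA x) +
        wordLength A hA S (srefl A hA x * u) ≤ wordLength A hA univ (v * u) := by
      have := wordLength_mul_le (srefl_mem_parabolic hx) hu
      have := wordLength_srefl_le (hA := hA) hx
      omega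
    have := hmin _ _ (mul_mem (srefl_mem_parabolic hx) hu)
      (by rw [mul_assoc, ← mul_assoc (srefl A hA x), srefl_mul_self, one_mul]) hlen
    omega
  · have := hmin _ _ (srefl_mem_parabolic hx) (mul_srefl_mul_srefl _ x).symm
      (by grw [wordLength_srefl_le hx]; omega)
    omega

/-- Humphreys: with `t` the last letter of a reduced word of `w`, factor `w = v u` with
`u ∈ W_{s,t}` and `v` shorter than `w`; then `w α_s = v (p α_s + q α_t)` with `p, q ≥ 0`. -/
theorem apply_sroot_nonneg_of_wordLength_le (hw : w ∈ parabolic A hA univ) {s : ι}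
    (h : wordLength A hA univ w ≤ wordLength A hA univ (w * srefl A hA s)) :
    0 ≤ w (sroot s) := by
  induction hn : wordLength A hA univ w using Nat.strong_induction_on generalizing w s with
  | _ n ih =>
  obtain ⟨l, -, hlen, hwl⟩ := exists_reduced_word hw
  rcases l.eq_nil_or_concat' with rfl | ⟨l, t, rfl⟩
  · simp [← hwl, sroot]
  have hlt : wordLength A hA univ (w * srefl A hA t) < n := by
    have := wordLength_wordProd_le (hA := hA) (S := univ) (l := l) (by simp)
    rw [← hwl, wordProd_append, wordProd_cons, wordProd_nil, mul_one, mul_srefl_mul_srefl]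
    simp only [List.length_append, List.length_singleton] at hlen
    omega
  have hts : t ≠ s := by
    rintro rfl
    omega
  obtain ⟨v, hv, u, hu, hvu, hlen', hv_min, hv_lt⟩ := exists_mul_parabolic_factorization hw {s, t}
  have hus : wordLength A hA {s, t} u ≤ wordLength A hA {s, t} (u * srefl A hA s) := by
    by_contra! hlt'
    have hus' : u * srefl A hA s ∈ parabolic A hA {s, t} :=
      mul_mem hu (srefl_mem_parabolic (by simp))
    have := wordLength_mul_le hv (parabolic_mono (subset_univ _) hus')
    have := wordLength_le_of_subset (subset_univ _) hus'
    rw [hvu, mul_assoc] at h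
    rw [hvu] at hlen'
    omega
  obtain ⟨p, q, hp, hq, hpq⟩ := exists_nonneg_apply_sroot_of_rankTwo hts.symm hu hus
  have hvlt : wordLength A hA univ v < n := hn ▸ hv_lt t (by simp) (hn ▸ hlt)
  have hvs := ih _ hvlt hv (hv_min s (by simp)) rfl
  have hvt := ih _ hvlt hv (hv_min t (by simp)) rfl
  rw [hvu, LinearEquiv.mul_apply, hpq, map_add, map_smul, map_smul]
  exact add_nonneg (smul_nonneg hp hvs) (smul_nonneg hq hvt)

theorem le_apply_of_corootFn_nonpos (hw : w ∈ parabolic A hA univ) {μ : ι → ℤ}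
    (hμ : ∀ i, corootFn A i μ ≤ 0) : μ ≤ w μ := by
  induction hn : wordLength A hA univ w using Nat.strong_induction_on generalizing w with
  | _ n ih =>
  obtain ⟨l, -, hlen, hwl⟩ := exists_reduced_word hw
  rcases l.eq_nil_or_concat' with rfl | ⟨l, i, rfl⟩
  · simp [← hwl]
  have hw' : wordProd A hA l ∈ parabolic A hA univ := ⟨l, by simp, rfl⟩
  have hl : wordLength A hA univ (wordProd A hA l) ≤ l.length := wordLength_wordProd_le (by simp)
  have hwi : w = wordProd A hA l * srefl A hA i := by simp [← hwl]
  simp only [List.length_append, List.length_singleton] at hlen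
  have hpos := apply_sroot_nonneg_of_wordLength_le hw' (s := i) (by rw [← hwi]; omega)
  have hle := ih _ (by omega) hw' rfl
  rw [hwi, LinearEquiv.mul_apply, srefl_apply, map_sub, map_smul, sub_eq_add_neg, ← neg_smul]
  exact hle.trans (le_add_of_nonneg_right (smul_nonneg (neg_nonneg.2 (hμ i)) hpos))

end Positivity

section ImaginaryCone

open Set

lemma smul_mem_convexHull_insert_zero {E : Type*} [AddCommGroup E] [Module ℝ E] {G : Set E}
    (hG : ∀ n : ℕ, n ≠ 0 → ∀ x ∈ G, n • x ∈ G) {c : ℝ} (hc : 0 ≤ c) {x : E}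
    (hx : x ∈ convexHull ℝ (insert 0 G)) : c • x ∈ convexHull ℝ (insert 0 G) := by
  have h0 : (0 : E) ∈ convexHull ℝ (insert 0 G) := subset_convexHull ℝ _ (mem_insert 0 G)
  refine convexHull_min ?_ ((convex_convexHull ℝ _).smul_preimage c) hx
  rintro y (rfl | hy)
  · simpa using h0
  -- `c • y` lies on the segment from `0` to `n • y` for `n ≥ c`
  set n : ℕ := ⌈c⌉₊ + 1
  have hn : (0 : ℝ) < n := by positivity
  have hny : (n : ℝ) • y ∈ convexHull ℝ (insert 0 G) := by
    rw [Nat.cast_smul_eq_nsmul]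
    exact subset_convexHull ℝ _ (mem_insert_of_mem 0 (hG n (Nat.succ_ne_zero _) y hy))
  have hcn : c / n ∈ Icc (0 : ℝ) 1 :=
    ⟨by positivity, (div_le_one hn).2 ((Nat.le_ceil c).trans (by simp [n]))⟩
  have := (convex_convexHull ℝ _).smul_mem_of_zero_mem h0 hny hcn
  rwa [smul_smul, div_mul_cancel₀ c hn.ne'] at this

variable {A : Matrix ι ι ℤ} {hA : IsGCM A}

lemma bform_sroot (x : ι → ℤ) (i : ι) : bform A x (sroot i) = corootFn A i x := by
  simp [bform, corootFn, sroot, Pi.single_apply]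

lemma nonneg_of_mem_posImRoots {β : ι → ℤ} (hβ : β ∈ posImRoots A hA) : 0 ≤ β := by
  obtain ⟨w, hw, α, hα, rfl⟩ := hβ
  have hα₀ : 0 ≤ α := hα.1
  exact hα₀.trans (le_apply_of_corootFn_nonpos (weylGroup_le_parabolic_univ hw)
    fun i => bform_sroot α i ▸ hα.2.2.2 i)

lemma nsmul_mem_posImRoots {β : ι → ℤ} (hβ : β ∈ posImRoots A hA) {n : ℕ} (hn : n ≠ 0) :
    n • β ∈ posImRoots A hA := by
  obtain ⟨w, hw, α, ⟨hα₀, hα, hconn, hanti⟩, rfl⟩ := hβ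
  refine ⟨w, hw, n • α, ⟨fun i => ?_, smul_ne_zero hn hα, ?_, fun i => ?_⟩, (map_nsmul w n α).symm⟩
  · simpa using mul_nonneg (Nat.cast_nonneg n) (hα₀ i)
  · have hsupp : {i | (n • α) i ≠ 0} = {i | α i ≠ 0} := by ext i; simp [hn]
    rwa [hsupp]
  · rw [bform_sroot, map_nsmul, ← bform_sroot, nsmul_eq_mul]
    exact mul_nonpos_of_nonneg_of_nonpos (Nat.cast_nonneg n) (hanti i)

variable (A hA) in
lemma isClosed_imCone : IsClosed (imCone A hA) := isClosed_closure

variable (A hA) in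
lemma convex_imCone : Convex ℝ (imCone A hA) := (convex_convexHull ℝ _).closure

lemma smul_mem_imCone {c : ℝ} (hc : 0 ≤ c) {x : ι → ℝ} (hx : x ∈ imCone A hA) :
    c • x ∈ imCone A hA := by
  refine map_mem_closure (continuous_const_smul c) hx fun y hy =>
    smul_mem_convexHull_insert_zero ?_ hc hy
  rintro n hn _ ⟨β, hβ, rfl⟩
  exact ⟨n • β, nsmul_mem_posImRoots hβ hn, by ext i; simp [castR]⟩

lemma imCone_subset_Ici : imCone A hA ⊆ Ici 0 := by
  refine closure_minimal (convexHull_min ?_ (convex_Ici 0)) isClosed_Ici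
  rintro _ (rfl | ⟨β, hβ, rfl⟩)
  · exact le_refl (0 : ι → ℝ)
  · exact fun i => by simpa [castR] using nonneg_of_mem_posImRoots hβ i

end ImaginaryCone

section Sector

open Set Complex ComplexConjugate
open scoped Pointwise

lemma exists_re_mul_pos_of_convex {Y : Set ℂ} (hconv : Convex ℝ Y) (hclosed : IsClosed Y)
    (h0 : (0 : ℂ) ∉ Y) : ∃ ω : ℂ, ∀ y ∈ Y, 0 < (y * ω).re := by
  obtain ⟨f, u, hf0, hfY⟩ := geometric_hahn_banach_point_closed hconv hclosed h0
  refine ⟨conj ((InnerProductSpace.toDual ℝ ℂ).symm f), fun y hy => ?_⟩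
  have hf : (y * conj ((InnerProductSpace.toDual ℝ ℂ).symm f)).re = f y := by
    rw [← Complex.inner, InnerProductSpace.toDual_symm_apply]
  rw [hf]
  linarith [hfY y hy, map_zero f]

lemma norm_mul_exp_arg_mul_sub_arg {z ω : ℂ} (hz : z ≠ 0) (hω : ω ≠ 0) :
    (‖z‖ : ℂ) * exp ((((z * ω).arg - ω.arg : ℝ)) * I) = z := by
  have hexp : ∀ x : ℂ, x ≠ 0 → exp (x.arg * I) = x / ‖x‖ := fun x hx => by
    rw [eq_div_iff (by simpa using hx), mul_comm, norm_mul_exp_arg_mul_I]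
  rw [ofReal_sub, sub_mul, exp_sub, hexp _ (mul_ne_zero hz hω), hexp _ hω, norm_mul, ofReal_mul]
  have : (‖z‖ : ℂ) ≠ 0 := by simpa using hz
  have : (‖ω‖ : ℂ) ≠ 0 := by simpa using hω
  field_simp

theorem exists_Ioi_smul_eq_sector {Y : Set ℂ} (hc : IsCompact Y) (hconv : Convex ℝ Y)
    (hne : Y.Nonempty) (h0 : (0 : ℂ) ∉ Y) :
    ∃ φ₁ φ₂ : ℝ, φ₁ ≤ φ₂ ∧ φ₂ - φ₁ < 1 ∧ Ioi (0 : ℝ) • Y = sector φ₁ φ₂ := by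
  obtain ⟨ω, hω⟩ := exists_re_mul_pos_of_convex hconv hc.isClosed h0
  have hne0 : ∀ z, 0 < (z * ω).re → z ≠ 0 ∧ ω ≠ 0 := fun z hz =>
    ⟨by rintro rfl; simp at hz, by rintro rfl; simp at hz⟩
  -- the argument, in units of `π`, measured from the half-plane `0 < re (z * ω)`
  set θ : ℂ → ℝ := fun z => ((z * ω).arg - ω.arg) / Real.pi
  have hpolar : ∀ z, 0 < (z * ω).re → z = ‖z‖ * exp (Real.pi * θ z * I) := fun z hz => by
    have hπθ : (Real.pi : ℂ) * (θ z : ℂ) = (((z * ω).arg - ω.arg : ℝ) : ℂ) := by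
      simp only [θ, ofReal_div]
      field_simp
    rw [hπθ, norm_mul_exp_arg_mul_sub_arg (hne0 z hz).1 (hne0 z hz).2]
  have hcont : ContinuousOn θ Y := fun y hy =>
    (((continuousAt_arg (Or.inl (hω y hy))).comp (f := fun z => z * ω)
      (continuous_mul_const ω).continuousAt).sub
      continuousAt_const).div_const _ |>.continuousWithinAt
  have hθ : ∀ y ∈ Y, |(y * ω).arg| < Real.pi / 2 := fun y hy =>
    abs_arg_lt_pi_div_two_iff.2 (Or.inl (hω y hy))
  obtain ⟨y₁, hy₁, hmin⟩ := hc.exists_isMinOn hne hcont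
  obtain ⟨y₂, hy₂, hmax⟩ := hc.exists_isMaxOn hne hcont
  refine ⟨θ y₁, θ y₂, hmin hy₂, ?_, ?_⟩
  · have h₁ := abs_lt.1 (hθ y₁ hy₁)
    have h₂ := abs_lt.1 (hθ y₂ hy₂)
    rw [← sub_div, div_lt_one Real.pi_pos]
    linarith
  ext z
  constructor
  · rintro ⟨c, hc, y, hy, rfl⟩
    have hθc : θ (c • y) = θ y := by simp only [θ, real_smul, mul_assoc, arg_real_mul _ hc]
    have hre : 0 < (c • y * ω).re := by simpa [real_smul, mul_assoc] using mul_pos hc (hω y hy)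
    exact ⟨‖c • y‖, norm_pos_iff.2 (hne0 _ hre).1, θ y, hmin hy, hmax hy, hθc ▸ hpolar _ hre⟩
  · rintro ⟨r, hr, φ, h₁, h₂, rfl⟩
    obtain ⟨y, hy, rfl⟩ := hconv.isPreconnected.intermediate_value hy₁ hy₂ hcont ⟨h₁, h₂⟩
    have hy0 : 0 < ‖y‖ := norm_pos_iff.2 (hne0 y (hω y hy)).1
    refine ⟨r / ‖y‖, div_pos hr hy0, y, hy, ?_⟩
    have hn : (‖y‖ : ℂ) ≠ 0 := by exact_mod_cast hy0.ne'
    calc ((r / ‖y‖ : ℝ) : ℂ) * y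
        = (r / ‖y‖ : ℂ) * (‖y‖ * exp (Real.pi * θ y * I)) := by rw [← hpolar y (hω y hy)]; simp
      _ = r * exp (Real.pi * θ y * I) := by field_simp

end Sector

section ConeBase

open Set
open scoped Pointwise

lemma image_diff_zero_eq_Ioi_smul {E F : Type*} [AddCommGroup E] [Module ℝ E] [AddCommGroup F]
    [Module ℝ F] (f : E →ₗ[ℝ] F) (σ : E →ₗ[ℝ] ℝ) {C : Set E}
    (hC : ∀ c : ℝ, 0 < c → ∀ x ∈ C, c • x ∈ C) (hσ : ∀ x ∈ C, x ≠ 0 → 0 < σ x) :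
    f '' (C \ {0}) = Ioi (0 : ℝ) • f '' (C ∩ σ ⁻¹' {1}) := by
  ext z
  constructor
  · rintro ⟨x, ⟨hx, hx0⟩, rfl⟩
    have hσx := hσ x hx hx0
    refine ⟨σ x, hσx, f ((σ x)⁻¹ • x), ⟨_, ⟨hC _ (inv_pos.2 hσx) x hx, ?_⟩, rfl⟩, ?_⟩
    · simp [hσx.ne']
    · show σ x • f _ = f x
      rw [← map_smul, smul_inv_smul₀ hσx.ne']
  · rintro ⟨c, hc, _, ⟨x, ⟨hx, hx1⟩, rfl⟩, rfl⟩
    have hx0 : x ≠ 0 := by rintro rfl; simp at hx1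
    exact ⟨c • x, ⟨hC c hc x hx, smul_ne_zero hc.ne' hx0⟩, map_smul f c x⟩

omit [DecidableEq ι] in
def pairCₗ (Z : ι → ℂ) : (ι → ℝ) →ₗ[ℝ] ℂ where
  toFun := pairC Z
  map_add' x y := by simp [pairC, mul_add, Finset.sum_add_distrib]
  map_smul' c x := by simp [pairC, Finset.mul_sum, Complex.real_smul, mul_left_comm]

omit [DecidableEq ι] in
def coordSum : (ι → ℝ) →ₗ[ℝ] ℝ := ∑ i, LinearMap.proj i

omit [DecidableEq ι] in
@[simp] lemma coordSum_apply (l : ι → ℝ) : coordSum l = ∑ i, l i := by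
  simp [coordSum]

variable (A : Matrix ι ι ℤ) (hA : IsGCM A)

def imConeBase : Set (ι → ℝ) := imCone A hA ∩ coordSum ⁻¹' {1}

lemma isCompact_imConeBase : IsCompact (imConeBase A hA) := by
  refine (isCompact_Icc (a := 0) (b := 1)).of_isClosed_subset ((isClosed_imCone A hA).inter
    (isClosed_singleton.preimage coordSum.continuous_of_finiteDimensional))
    fun x hx => ⟨imCone_subset_Ici hx.1, fun i => ?_⟩
  have hsum : ∑ j, x j = 1 := by simpa using hx.2
  rw [Pi.one_apply, ← hsum]
  exact Finset.single_le_sum (fun j _ => imCone_subset_Ici hx.1 j) (Finset.mem_univ i)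

lemma convex_imConeBase : Convex ℝ (imConeBase A hA) :=
  (convex_imCone A hA).inter ((convex_singleton 1).linear_preimage coordSum)

variable {A hA}

lemma coordSum_pos_of_mem_imCone {x : ι → ℝ} (hx : x ∈ imCone A hA) (hx0 : x ≠ 0) :
    0 < coordSum x := by
  have hx' : 0 ≤ x := imCone_subset_Ici hx
  obtain ⟨i, hi⟩ := Function.ne_iff.1 hx0
  simpa using Finset.sum_pos' (fun i _ => hx' i) ⟨i, Finset.mem_univ i, (hx' i).lt_of_ne' hi⟩

lemma ne_zero_of_mem_imConeBase {x : ι → ℝ} (hx : x ∈ imConeBase A hA) : x ≠ 0 := by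
  rintro rfl
  simpa using hx.2

lemma imConeBase_nonempty (hne : (imCone A hA \ {0}).Nonempty) : (imConeBase A hA).Nonempty := by
  obtain ⟨x, hx, hx0⟩ := hne
  have hpos := coordSum_pos_of_mem_imCone hx hx0
  refine ⟨(coordSum x)⁻¹ • x, smul_mem_imCone (inv_nonneg.2 hpos.le) hx, ?_⟩
  rw [mem_preimage, map_smul, smul_eq_mul, inv_mul_cancel₀ hpos.ne', mem_singleton_iff]

end ConeBase

/-- for `Z ∈ X`, the image `Z(I₀)` is a sector
`{r e^{iπφ} : r > 0, φ₁ ≤ φ ≤ φ₂}` with `φ₂ - φ₁ < 1`. -/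
theorem image_imCone_eq_sector (A : Matrix ι ι ℤ) (hA : IsGCM A)
    (hne : (imCone A hA \ {0}).Nonempty) (Z : ι → ℂ) (hZ : Z ∈ Xset A hA) :
    ∃ φ₁ φ₂ : ℝ, φ₁ ≤ φ₂ ∧ φ₂ - φ₁ < 1 ∧
      pairC Z '' (imCone A hA \ {0}) = sector φ₁ φ₂ := by
  have h0 : (0 : ℂ) ∉ pairCₗ Z '' imConeBase A hA := by
    rintro ⟨b, hb, hZb⟩
    exact hZ b ⟨hb.1, ne_zero_of_mem_imConeBase hb⟩ hZb
  obtain ⟨φ₁, φ₂, hle, hlt, hsec⟩ := exists_Ioi_smul_eq_sector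
    ((isCompact_imConeBase A hA).image (pairCₗ Z).continuous_of_finiteDimensional)
    ((convex_imConeBase A hA).linear_image _) ((imConeBase_nonempty hne).image _) h0
  refine ⟨φ₁, φ₂, hle, hlt, ?_⟩
  rw [← hsec]
  exact image_diff_zero_eq_Ioi_smul (pairCₗ Z) coordSum
    (fun c hc x hx => smul_mem_imCone hc.le hx) fun x hx hx0 => coordSum_pos_of_mem_imCone hx hx0

end KacMoodyStab
end
end

section
/- Let A be an indecomposable GCM of affine or indefinite type. For i = 1,…,n define the walls W_{i,+} = {Z ∈ Xreg^N : Z(α_i) ∈ ℝ_{>0} and Z(α_j) ∈ ℍ for all j ≠ i} and W_{i,−} = {Z ∈ Xreg^N : Z(α_i) ∈ ℝ_{<0} and Z(α_j) ∈ ℍ for all j ≠ i}. Then for every Z ∈ W_{i,+} ∪ W_{i,−} there is an open neighborhood U of Z in Xreg^N such that U ⊆ C^N ∪ r_i(C^N). -/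
open scoped BigOperators

noncomputable section

namespace KacMoodyStab

variable {ι : Type*} [Fintype ι] [DecidableEq ι]

/-! Near a point `Z` of the wall `W_{i,±}`, the coordinates `Z(α_j)` for `j ≠ i` and
`(r_i Z)(α_j) = Z(α_j) - a_{ji} Z(α_i)` lie in the open upper half-plane, since `Z(α_i)` is real;
both are open conditions. So a nearby `V ∈ Xreg^N` lies in `C^N` unless `V(α_i) ∉ H`, and then
`(r_i V)(α_i) = -V(α_i) ∈ H` because `V(α_i) ≠ 0`. Such an `r_i V` is again in `Xreg^N`: the Weyl
group preserves the imaginary cone, and as all simple-root values of `r_i V` lie in the additive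
cone `H`, so does its value on every positive root, which is therefore non-zero. -/

lemma ne_zero_of_mem_semiClosedH {z : ℂ} (hz : z ∈ semiClosedH) : z ≠ 0 := by
  rintro rfl
  simp [semiClosedH] at hz

lemma add_mem_semiClosedH {z w : ℂ} (hz : z ∈ semiClosedH) (hw : w ∈ semiClosedH) :
    z + w ∈ semiClosedH := by
  simp only [semiClosedH, Set.mem_union, Set.mem_ofPred_eq, Complex.add_im,
    Complex.add_re] at hz hw ⊢
  rcases hz with hz | hz <;> rcases hw with hw | hw
  · left; linarith
  · left; linarith [hw.1]
  · left; linarith [hz.1]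
  · right; exact ⟨by linarith [hz.1, hw.1], by linarith [hz.2, hw.2]⟩

lemma mul_intCast_mem_semiClosedH {z : ℂ} (hz : z ∈ semiClosedH) {n : ℤ} (hn : 0 < n) :
    z * n ∈ semiClosedH := by
  have hn' : (0 : ℝ) < n := by exact_mod_cast hn
  rcases hz with hz | hz
  · left
    simpa using mul_pos hz hn'
  · right
    simpa [hz.1] using mul_neg_of_neg_of_pos hz.2 hn'

lemma neg_mem_semiClosedH {z : ℂ} (hz : z ≠ 0) (hzH : z ∉ semiClosedH) :
    -z ∈ semiClosedH := by
  simp only [semiClosedH, Set.mem_union, Set.mem_ofPred_eq, not_or, not_and, not_lt] at hzH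
  simp only [semiClosedH, Set.mem_union, Set.mem_ofPred_eq, Complex.neg_im, Complex.neg_re,
    neg_pos, neg_eq_zero, neg_lt_zero]
  rcases hzH.1.lt_or_eq with him | him
  · exact Or.inl him
  · refine Or.inr ⟨him, (hzH.2 him).lt_of_ne fun hre => hz ?_⟩
    exact Complex.ext (by simpa using hre.symm) (by simpa using him)

omit [DecidableEq ι] in
lemma pairCZ_mem_semiClosedH {V : ι → ℂ} (hV : ∀ j, V j ∈ semiClosedH) {α : ι → ℤ}
    (hα : ∀ j, 0 ≤ α j) (hα0 : α ≠ 0) : pairCZ V α ∈ semiClosedH := by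
  rw [pairCZ, ← Finset.sum_filter_of_ne (p := fun j => α j ≠ 0) fun j _ h hα => by simp_all]
  obtain ⟨j, hj⟩ := Function.ne_iff.mp hα0
  refine Finset.sum_induction_nonempty _ _ (fun _ _ => add_mem_semiClosedH)
    ⟨j, by simpa using hj⟩ fun k hk => ?_
  exact mul_intCast_mem_semiClosedH (hV k) ((hα k).lt_of_ne' (Finset.mem_filter.mp hk).2)

omit [Fintype ι] in
lemma castR_sroot (j : ι) : castR (sroot j) = Pi.single j 1 := by
  funext k
  by_cases h : k = j <;> simp [castR, sroot, h]

lemma extR_castR (w : (ι → ℤ) ≃ₗ[ℤ] (ι → ℤ)) (α : ι → ℤ) :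
    extR w (castR α) = castR (w α) := by
  have hα : α = ∑ j, α j • sroot j := by
    simpa [sroot] using ((Pi.basisFun ℤ ι).sum_repr α).symm
  funext k
  conv_rhs => rw [hα]
  simp only [extR, castR, map_sum, map_smul, Finset.sum_apply, Pi.smul_apply, smul_eq_mul]
  push_cast
  simp only [mul_comm]

def extRₗ (w : (ι → ℤ) ≃ₗ[ℤ] (ι → ℤ)) : (ι → ℝ) →ₗ[ℝ] (ι → ℝ) :=
  Matrix.mulVecLin (Matrix.of fun k j => ((w (sroot j) k : ℤ) : ℝ))

lemma coe_extRₗ (w : (ι → ℤ) ≃ₗ[ℤ] (ι → ℤ)) : ⇑(extRₗ w) = extR w := rfl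

lemma extR_extR (w v : (ι → ℤ) ≃ₗ[ℤ] (ι → ℤ)) (l : ι → ℝ) :
    extR w (extR v l) = extR (v.trans w) l := by
  have h : (extRₗ w).comp (extRₗ v) = extRₗ (v.trans w) :=
    (Pi.basisFun ℝ ι).ext fun j => by
      simp only [LinearMap.comp_apply, Pi.basisFun_apply, coe_extRₗ, ← castR_sroot,
        extR_castR, LinearEquiv.trans_apply]
  simpa only [LinearMap.comp_apply, coe_extRₗ] using LinearMap.congr_fun h l

lemma extR_extR_symm (w : (ι → ℤ) ≃ₗ[ℤ] (ι → ℤ)) (l : ι → ℝ) :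
    extR w (extR w.symm l) = l := by
  rw [extR_extR, LinearEquiv.symm_trans_self]
  funext k
  simp [extR, sroot, Pi.single_apply]

lemma continuous_extR (w : (ι → ℤ) ≃ₗ[ℤ] (ι → ℤ)) : Continuous (extR w) :=
  (extRₗ w).continuous_of_finiteDimensional

section

variable {A : Matrix ι ι ℤ} {hA : IsGCM A}

lemma image_extR_posImRoots_subset {w : (ι → ℤ) ≃ₗ[ℤ] (ι → ℤ)} (hw : w ∈ weylGroup A hA) :
    extR w '' (castR '' posImRoots A hA) ⊆ castR '' posImRoots A hA := by
  rintro _ ⟨_, ⟨_, ⟨v, hv, α, hα, rfl⟩, rfl⟩, rfl⟩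
  exact ⟨w (v α), ⟨w * v, mul_mem hw hv, α, hα, rfl⟩, (extR_castR w _).symm⟩

lemma image_extR_imCone_subset {w : (ι → ℤ) ≃ₗ[ℤ] (ι → ℤ)} (hw : w ∈ weylGroup A hA) :
    extR w '' imCone A hA ⊆ imCone A hA := by
  refine (image_closure_subset_closure_image (continuous_extR w)).trans (closure_mono ?_)
  rw [← coe_extRₗ, LinearMap.image_convexHull, Set.image_insert_eq, map_zero]
  exact convexHull_mono (Set.insert_subset_insert (image_extR_posImRoots_subset hw))

lemma image_extR_imCone_diff_zero {w : (ι → ℤ) ≃ₗ[ℤ] (ι → ℤ)} (hw : w ∈ weylGroup A hA) :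
    extR w '' (imCone A hA \ {0}) = imCone A hA \ {0} := by
  have hinj : Function.Injective (extR w) := fun l m h => by
    rw [← extR_extR_symm w.symm l, ← extR_extR_symm w.symm m, LinearEquiv.symm_symm, h]
  rw [Set.image_sdiff hinj, Set.image_singleton, ← coe_extRₗ, map_zero, coe_extRₗ]
  refine congrArg (· \ {0}) ((image_extR_imCone_subset hw).antisymm fun l hl => ?_)
  exact ⟨extR w.symm l, image_extR_imCone_subset (w := w.symm) (inv_mem hw) ⟨l, hl, rfl⟩,
    extR_extR_symm w l⟩

lemma pairC_actC (w : (ι → ℤ) ≃ₗ[ℤ] (ι → ℤ)) (Z : ι → ℂ) (l : ι → ℝ) :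
    pairC (actC w Z) l = pairC Z (extR w.symm l) := by
  simp only [pairC, actC, extR, Complex.ofReal_sum, Complex.ofReal_mul, Complex.ofReal_intCast,
    Finset.mul_sum, Finset.sum_mul]
  rw [Finset.sum_comm]
  exact Finset.sum_congr rfl fun _ _ => Finset.sum_congr rfl fun _ _ => by ring

lemma sroot_mem_posRealRoots (i : ι) : sroot i ∈ posRealRoots A hA := by
  refine ⟨⟨1, one_mem _, i, rfl⟩, fun j => ?_⟩
  by_cases h : j = i <;> simp [sroot, h]

lemma ne_zero_of_mem_posRealRoots {α : ι → ℤ} (hα : α ∈ posRealRoots A hA) : α ≠ 0 := by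
  obtain ⟨⟨w, -, k, rfl⟩, -⟩ := hα
  exact w.map_ne_zero_iff.mpr (Pi.single_ne_zero_iff.mpr one_ne_zero)

lemma srefl_mem_weylGroup (i : ι) : srefl A hA i ∈ weylGroup A hA :=
  Subgroup.subset_closure ⟨i, rfl⟩

lemma actC_srefl_apply (i j : ι) (V : ι → ℂ) :
    actC (srefl A hA i) V j = V j - A j i * V i := by
  have hcoroot : corootFn A i (sroot j) = A j i := by
    simp [corootFn, sroot, Pi.single_apply]
  simp only [actC, srefl, Module.reflection_symm, Module.reflection_apply, hcoroot]
  simp [sroot, Pi.single_apply, mul_sub, Finset.sum_sub_distrib, mul_comm]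

lemma actC_srefl_actC_srefl (i : ι) (V : ι → ℂ) :
    actC (srefl A hA i) (actC (srefl A hA i) V) = V := by
  funext j
  simp only [actC_srefl_apply, hA.2.1 i]
  push_cast
  ring

lemma actC_mem_CN {w : (ι → ℤ) ≃ₗ[ℤ] (ι → ℤ)} (hw : w ∈ weylGroup A hA) {V : ι → ℂ}
    (hV : V ∈ XregN A hA) (hwV : ∀ j, actC w V j ∈ semiClosedH) : actC w V ∈ CN A hA := by
  obtain ⟨⟨hVX, -⟩, φ₁, φ₂, hφ, hφ₂, hφ₁₂, hsector⟩ := hV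
  have himage : pairC (actC w V) '' (imCone A hA \ {0}) = pairC V '' (imCone A hA \ {0}) := by
    conv_rhs => rw [← image_extR_imCone_diff_zero (w := w.symm) (inv_mem hw), Set.image_image]
    exact Set.image_congr fun l _ => pairC_actC w V l
  refine ⟨⟨⟨fun l hl => ?_, fun α hα => ?_⟩, φ₁, φ₂, hφ, hφ₂, hφ₁₂, himage.trans hsector⟩, hwV⟩
  · rw [pairC_actC]
    exact hVX _ (image_extR_imCone_diff_zero (inv_mem hw) ▸ Set.mem_image_of_mem _ hl)
  · exact ne_zero_of_mem_semiClosedH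
      (pairCZ_mem_semiClosedH hwV hα.2 (ne_zero_of_mem_posRealRoots hα))

end

lemma isOpen_setOf_im_pos_actC (w : (ι → ℤ) ≃ₗ[ℤ] (ι → ℤ)) (s : Finset ι) :
    IsOpen {V : ι → ℂ | ∀ j ∈ s, 0 < (V j).im ∧ 0 < (actC w V j).im} := by
  simp only [Set.ofPred_forall]
  refine isOpen_biInter_finset fun j _ => (isOpen_lt continuous_const ?_).and
    (isOpen_lt continuous_const ?_)
  · fun_prop
  · simp only [actC]
    fun_prop

theorem wall_neighborhood_subset_general (A : Matrix ι ι ℤ) (hA : IsGCM A) (i : ι)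
    (Z : ι → ℂ) (hZ : Z ∈ wallPlus A hA i ∪ wallMinus A hA i) :
    ∃ U : Set (ι → ℂ), IsOpen U ∧ Z ∈ U ∧
      U ∩ XregN A hA ⊆ CN A hA ∪ actC (srefl A hA i) '' CN A hA := by
  have hZi : (Z i).im = 0 := by rcases hZ with h | h <;> exact h.2.1.1
  have hZj : ∀ j, j ≠ i → 0 < (Z j).im := by rcases hZ with h | h <;> exact h.2.2
  refine ⟨_, isOpen_setOf_im_pos_actC (srefl A hA i) (Finset.univ.erase i),
    fun j hj => ⟨hZj j (Finset.ne_of_mem_erase hj), ?_⟩, ?_⟩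
  · simpa [actC_srefl_apply, hZi] using hZj j (Finset.ne_of_mem_erase hj)
  rintro V ⟨hVU, hVN⟩
  have hVj : ∀ j, j ≠ i → 0 < (V j).im ∧ 0 < (actC (srefl A hA i) V j).im :=
    fun j hj => hVU j (Finset.mem_erase.mpr ⟨hj, Finset.mem_univ j⟩)
  by_cases hVi : V i ∈ semiClosedH
  · refine Or.inl ⟨hVN, fun j => ?_⟩
    rcases eq_or_ne j i with rfl | hj
    exacts [hVi, Or.inl (hVj j hj).1]
  · refine Or.inr ⟨_, actC_mem_CN (srefl_mem_weylGroup i) hVN fun j => ?_,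
      actC_srefl_actC_srefl i V⟩
    rcases eq_or_ne j i with rfl | hj
    · have hV0 : V j ≠ 0 := by
        simpa [pairCZ, sroot, Pi.single_apply] using
          hVN.1.2 _ (sroot_mem_posRealRoots (hA := hA) j)
      simpa [actC_srefl_apply, hA.2.1 j, two_mul] using neg_mem_semiClosedH hV0 hVi
    · exact Or.inl (hVj j hj).2

/-- every point of a wall `W_{i,±}` has an open neighborhood in `Xreg^N`
contained in `C^N ∪ r_i(C^N)`. -/
theorem wall_neighborhood_subset (A : Matrix ι ι ℤ) (hA : IsGCM A)
    (hconn : (dynkin A).Connected) (hnf : ¬ IsFiniteType A) (i : ι)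
    (Z : ι → ℂ) (hZ : Z ∈ wallPlus A hA i ∪ wallMinus A hA i) :
    ∃ U : Set (ι → ℂ), IsOpen U ∧ Z ∈ U ∧
      U ∩ XregN A hA ⊆ CN A hA ∪ actC (srefl A hA i) '' CN A hA :=
  wall_neighborhood_subset_general A hA i Z hZ

end KacMoodyStab
end
end
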